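/- arXiv:2401.11741 — 9 statements merged into one kernel-verified Lean document; each statement's English description precedes it below -/
import Mathlib

section
/- Let n ≥ 1 and let S_n be the star graph with vertex set {0,1,...,n-1} and edges {0,i} for 1 ≤ i ≤ n-1. A partial transformation α of {0,1,...,n-1} is a partial weak endomorphism of S_n if and only if one of the following holds: (1) 0 ∉ dom(α); (2) 0 ∈ dom(α) and 0α = 0; (3) 0 ∈ dom(α), 0α ≠ 0, and im(α) ⊆ {0, 0α}. -/
def pmul {V : Type*} (f g : V → Option V) : V → Option V := fun x => (f x).bind g

def pdom {V : Type*} (f : V → Option V) : Set V := {x | f x ≠ none}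

def pim {V : Type*} (f : V → Option V) : Set V := {y | ∃ x, f x = some y}

def pker {V : Type*} (f : V → Option V) : V → V → Prop := fun x y => f x ≠ none ∧ f x = f y

def PInj {V : Type*} (f : V → Option V) : Prop := ∀ u v a, f u = some a → f v = some a → u = v

def edge {n : ℕ} (u v : Fin n) : Prop := (u.val = 0 ∧ v.val ≠ 0) ∨ (v.val = 0 ∧ u.val ≠ 0)

def IsPEnd {n : ℕ} (α : Fin n → Option (Fin n)) : Prop :=
  ∀ u v a b, α u = some a → α v = some b → edge u v → edge a b

def IsPwEnd {n : ℕ} (α : Fin n → Option (Fin n)) : Prop :=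
  ∀ u v a b, α u = some a → α v = some b → edge u v → a ≠ b → edge a b

def IsPsEnd {n : ℕ} (α : Fin n → Option (Fin n)) : Prop :=
  ∀ u v a b, α u = some a → α v = some b → (edge u v ↔ edge a b)

def IsPswEnd {n : ℕ} (α : Fin n → Option (Fin n)) : Prop :=
  ∀ u v a b, α u = some a → α v = some b → ((edge u v ∧ a ≠ b) ↔ edge a b)

def PEndS (n : ℕ) : Set (Fin n → Option (Fin n)) := {α | IsPEnd α}
def PwEndS (n : ℕ) : Set (Fin n → Option (Fin n)) := {α | IsPwEnd α}
def PsEndS (n : ℕ) : Set (Fin n → Option (Fin n)) := {α | IsPsEnd α}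
def PswEndS (n : ℕ) : Set (Fin n → Option (Fin n)) := {α | IsPswEnd α}
def IEndS (n : ℕ) : Set (Fin n → Option (Fin n)) := {α | PInj α ∧ IsPEnd α}
def PAutS (n : ℕ) : Set (Fin n → Option (Fin n)) := {α | PInj α ∧ IsPsEnd α}

def RegularIn {V : Type*} (M : Set (V → Option V)) (a : V → Option V) : Prop :=
  ∃ b ∈ M, pmul (pmul a b) a = a

def GreenL {V : Type*} (M : Set (V → Option V)) (a b : V → Option V) : Prop :=
  (∃ g ∈ M, a = pmul g b) ∧ (∃ g ∈ M, b = pmul g a)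

def GreenR {V : Type*} (M : Set (V → Option V)) (a b : V → Option V) : Prop :=
  (∃ g ∈ M, a = pmul b g) ∧ (∃ g ∈ M, b = pmul a g)

def GreenH {V : Type*} (M : Set (V → Option V)) (a b : V → Option V) : Prop :=
  GreenL M a b ∧ GreenR M a b

def GreenJ {V : Type*} (M : Set (V → Option V)) (a b : V → Option V) : Prop :=
  (∃ g ∈ M, ∃ h ∈ M, a = pmul (pmul g b) h) ∧ (∃ g ∈ M, ∃ h ∈ M, b = pmul (pmul g a) h)

/-! Every edge of the star contains the centre `0`, so the weak-endomorphism condition only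
constrains pairs `(0, v)`: each image `vα` must equal `0α` or be adjacent to it. This is automatic
when `0α = 0`; otherwise, since two non-central vertices are never adjacent, every image must be
`0` or `0α`. -/

theorem edge_iff {n : ℕ} {u v : Fin n} : edge u v ↔ u ≠ v ∧ (u.val = 0 ∨ v.val = 0) := by
  simp only [edge, ne_eq, Fin.ext_iff]
  omega

theorem isPwEnd_iff_of_center {n : ℕ} (α : Fin n → Option (Fin n)) {z : Fin n}
    (hz : z.val = 0) :
    IsPwEnd α ↔ ∀ a, α z = some a → ∀ b ∈ pim α, a ≠ b → a = z ∨ b = z := by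
  have hcenter : ∀ w : Fin n, w.val = 0 ↔ w = z := fun w => by rw [Fin.ext_iff, hz]
  simp only [IsPwEnd, edge_iff, hcenter]
  constructor
  · rintro h a hza b ⟨v, hv⟩ hab
    have hvz : z ≠ v := by rintro rfl; exact hab (Option.some_inj.mp (hza.symm.trans hv))
    exact (h z v a b hza hv ⟨hvz, Or.inl rfl⟩ hab).2
  · rintro h u v a b hu hv ⟨-, rfl | rfl⟩ hab
    · exact ⟨hab, h a hu b ⟨v, hv⟩ hab⟩
    · exact ⟨hab, (h b hv a ⟨u, hu⟩ (Ne.symm hab)).symm⟩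

theorem isPwEnd_iff_pim_subset {n : ℕ} (α : Fin n → Option (Fin n)) {z : Fin n}
    (hz : z.val = 0) :
    IsPwEnd α ↔ ∀ a, α z = some a → a ≠ z → pim α ⊆ {z, a} := by
  rw [isPwEnd_iff_of_center α hz]
  refine forall_congr' fun a => imp_congr_right fun _ =>
    ⟨fun h ha b hb => ?_, fun h b hb hab => ?_⟩
  · by_cases hba : b = a
    · exact Or.inr hba
    · exact Or.inl ((h b hb (Ne.symm hba)).resolve_left ha)
  · by_cases ha : a = z
    · exact Or.inl ha
    · exact Or.inr ((h ha hb).resolve_right (Ne.symm hab))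

theorem stmt0 (n : ℕ) (hn : 1 ≤ n) (α : Fin n → Option (Fin n)) :
    IsPwEnd α ↔
      ((⟨0, hn⟩ : Fin n) ∉ pdom α
        ∨ α ⟨0, hn⟩ = some ⟨0, hn⟩
        ∨ (∃ a : Fin n, α ⟨0, hn⟩ = some a ∧ a ≠ ⟨0, hn⟩
            ∧ pim α ⊆ {(⟨0, hn⟩ : Fin n), a})) := by
  rw [isPwEnd_iff_pim_subset α (z := ⟨0, hn⟩) rfl]
  cases hα₀ : α ⟨0, hn⟩ with
  | none => simp [pdom, hα₀]
  | some a => by_cases ha : a = ⟨0, hn⟩ <;> simp [pdom, hα₀, ha]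
end

section
/- Let n ≥ 1 and let S_n be the star graph on vertices {0,1,...,n-1}. The number of partial weak endomorphisms of S_n equals 2(n+1)^{n-1} + (n-1)·3^{n-1}. -/
def allowedPw {n : ℕ} (z : Fin n) (v0 x : Option (Fin n)) : Prop :=
  ∀ c : Fin n, v0 = some c → c ≠ z → (x = none ∨ x = some z ∨ x = some c)

lemma isPwEnd_iff {n : ℕ} (z : Fin n) (hz : z.val = 0) (α : Fin n → Option (Fin n)) :
    IsPwEnd α ↔ ∀ i, i ≠ z → allowedPw z (α z) (α i) := by
  constructor
  · intro h i hi c hc hcz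
    cases hαi : α i with
    | none => exact Or.inl rfl
    | some b =>
      by_cases hb : b = c
      · exact Or.inr (Or.inr (congrArg some hb))
      · have hiv : i.val ≠ 0 := fun h0 => hi (Fin.ext (h0.trans hz.symm))
        have he := h z i c b hc hαi (Or.inl ⟨hz, hiv⟩) (fun h' => hb h'.symm)
        rcases he with ⟨hc0, _⟩ | ⟨hb0, _⟩
        · exact absurd (Fin.ext (hc0.trans hz.symm)) hcz
        · exact Or.inr (Or.inl (congrArg some (Fin.ext (hb0.trans hz.symm))))
  · intro h u v a b hu hv he hab
    have key : ∀ u' v' a' b', α u' = some a' → α v' = some b' → u'.val = 0 → v'.val ≠ 0 →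
        a' ≠ b' → edge a' b' := by
      intro u' v' a' b' hu' hv' hu0 hv0 hab'
      have huz : u' = z := Fin.ext (hu0.trans hz.symm)
      have hvz : v' ≠ z := fun h0 => hv0 (h0 ▸ hz)
      by_cases ha : a' = z
      · have hb0 : b'.val ≠ 0 := fun h0 => hab' ((Fin.ext (h0.trans hz.symm)).symm ▸ ha)
        exact Or.inl ⟨ha ▸ hz, hb0⟩
      · have := h v' hvz a' (huz ▸ hu') ha
        rcases this with h0 | h0 | h0
        · rw [hv'] at h0; exact absurd h0 (by simp)
        · rw [hv'] at h0
          have hbz : b' = z := by injection h0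
          have ha0 : a'.val ≠ 0 := fun h0 => ha (Fin.ext (h0.trans hz.symm))
          exact Or.inr ⟨hbz ▸ hz, ha0⟩
        · rw [hv'] at h0
          exact absurd (by injection h0 : b' = a').symm hab'
    rcases he with ⟨hu0, hv0⟩ | ⟨hv0, hu0⟩
    · exact key u v a b hu hv hu0 hv0 hab
    · rcases key v u b a hv hu hv0 hu0 (Ne.symm hab) with ⟨x, y⟩ | ⟨x, y⟩
      · exact Or.inr ⟨x, y⟩
      · exact Or.inl ⟨x, y⟩

theorem stmt1 (n : ℕ) (hn : 1 ≤ n) :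
    (PwEndS n).ncard = 2 * (n + 1) ^ (n - 1) + (n - 1) * 3 ^ (n - 1) := by
  classical
  set z : Fin n := ⟨0, hn⟩ with hzdef
  have hz : z.val = 0 := rfl
  have e1 : ↥(PwEndS n) ≃
      {p : Option (Fin n) × ({i : Fin n // i ≠ z} → Option (Fin n)) //
        ∀ i : {i : Fin n // i ≠ z}, allowedPw z p.1 (p.2 i)} :=
    (Equiv.funSplitAt z (Option (Fin n))).subtypeEquiv (fun α => by
      rw [show (α ∈ PwEndS n) = IsPwEnd α from rfl, isPwEnd_iff z hz]
      constructor
      · intro h i; exact h i.1 i.2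
      · intro h i hi; exact h ⟨i, hi⟩)
  have e2 := Equiv.subtypeProdEquivSigmaSubtype
    (fun (v0 : Option (Fin n)) (g : {i : Fin n // i ≠ z} → Option (Fin n)) =>
      ∀ i, allowedPw z v0 (g i))
  have hidx : Nat.card {i : Fin n // i ≠ z} = n - 1 := by
    rw [Nat.card_eq_fintype_card]
    have : Fintype.card {i : Fin n // ¬ i = z} = n - 1 := by
      rw [Fintype.card_subtype_compl, Fintype.card_subtype_eq, Fintype.card_fin]
    simpa using this
  have hfiber : ∀ v0 : Option (Fin n),
      Nat.card {g : {i : Fin n // i ≠ z} → Option (Fin n) // ∀ i, allowedPw z v0 (g i)} =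
        (Nat.card {x : Option (Fin n) // allowedPw z v0 x}) ^ (n - 1) := by
    intro v0
    rw [Nat.card_congr (Equiv.subtypePiEquivPi (p := fun _ => allowedPw z v0)), Nat.card_fun, hidx]
  have hcard : ∀ v0 : Option (Fin n), Nat.card {x : Option (Fin n) // allowedPw z v0 x} =
      if v0 = none ∨ v0 = some z then n + 1 else 3 := by
    intro v0
    by_cases h : v0 = none ∨ v0 = some z
    · rw [if_pos h]
      have htriv : ∀ x, allowedPw z v0 x := by
        intro x c hc hcz
        rcases h with h | h
        · rw [h] at hc; exact absurd hc (by simp)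
        · rw [h] at hc; exact absurd ((by injection hc : z = c).symm) hcz
      rw [Nat.card_congr (Equiv.subtypeUnivEquiv htriv), Nat.card_eq_fintype_card,
        Fintype.card_option, Fintype.card_fin]
    · rw [if_neg h]
      push_neg at h
      obtain ⟨c, hc⟩ : ∃ c, v0 = some c := Option.ne_none_iff_exists'.mp h.1
      have hcz : c ≠ z := fun hh => h.2 (by rw [hc, hh])
      have hiff : ∀ x, allowedPw z v0 x ↔ x ∈ ({none, some z, some c} : Finset (Option (Fin n))) := by
        intro x
        constructor
        · intro hx
          have := hx c (by rw [hc]) hcz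
          simpa using this
        · intro hx c' hc' hcz'
          have hcc : c' = c := by rw [hc] at hc'; injection hc'.symm
          simpa [hcc] using hx
      rw [Nat.card_congr ((Equiv.subtypeEquivRight hiff).trans
        (Equiv.refl _))]
      rw [Nat.card_eq_fintype_card]
      rw [Fintype.card_coe]
      rw [Finset.card_insert_of_notMem (by simp), Finset.card_insert_of_notMem (by simp [Ne.symm hcz]),
        Finset.card_singleton]
  have : (PwEndS n).ncard = ∑ v0 : Option (Fin n),
      (if v0 = none ∨ v0 = some z then n + 1 else 3) ^ (n - 1) := by
    rw [← Nat.card_coe_set_eq, Nat.card_congr (e1.trans e2), Nat.card_eq_fintype_card,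
      Fintype.card_sigma]
    congr 1
    funext v0
    rw [← Nat.card_eq_fintype_card, hfiber, hcard]
  rw [this, Fintype.sum_option]
  simp only [Option.some.injEq, false_or, true_or, if_true, reduceCtorEq]
  have : ∑ c : Fin n, (if c = z then n + 1 else 3) ^ (n - 1) =
      ∑ c : Fin n, (if c = z then (n + 1) ^ (n - 1) else 3 ^ (n - 1)) := by
    apply Finset.sum_congr rfl
    intro c _
    split_ifs <;> rfl
  rw [this, Finset.sum_ite, Finset.sum_const, Finset.sum_const,
    Finset.filter_eq' Finset.univ z, if_pos (Finset.mem_univ z)]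
  have hne : (Finset.univ.filter (fun c : Fin n => ¬ c = z)).card = n - 1 := by
    have : Finset.univ.filter (fun c : Fin n => c ≠ z) = Finset.univ.erase z := Finset.filter_ne' _ _
    simp only [ne_eq] at this
    rw [this, Finset.card_erase_of_mem (Finset.mem_univ z), Finset.card_univ, Fintype.card_fin]
  rw [hne, Finset.card_singleton]
  ring
end

section
/- Let n ≥ 1 and let S_n be the star graph on vertices {0,1,...,n-1}. A partial transformation α of {0,1,...,n-1} is a partial endomorphism of S_n if and only if one of the following holds: (1) 0 ∉ dom(α); (2) 0 ∈ dom(α), 0α = 0, and α maps dom(α) ∩ {1,...,n-1} into {1,...,n-1}; (3) 0 ∈ dom(α), 0α ≠ 0, and α maps dom(α) ∩ {1,...,n-1} into {0}. -/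
theorem stmt2 (n : ℕ) (hn : 1 ≤ n) (α : Fin n → Option (Fin n)) :
    IsPEnd α ↔
      ((⟨0, hn⟩ : Fin n) ∉ pdom α
        ∨ (α ⟨0, hn⟩ = some ⟨0, hn⟩
            ∧ ∀ x a : Fin n, x ≠ ⟨0, hn⟩ → α x = some a → a ≠ ⟨0, hn⟩)
        ∨ (∃ b : Fin n, α ⟨0, hn⟩ = some b ∧ b ≠ ⟨0, hn⟩
            ∧ ∀ x a : Fin n, x ≠ ⟨0, hn⟩ → α x = some a → a = ⟨0, hn⟩)) := by
  have hz : ∀ x : Fin n, x ≠ ⟨0, hn⟩ ↔ x.val ≠ 0 := by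
    intro x
    constructor
    · intro h h0; exact h (Fin.ext h0)
    · intro h h0; exact h (by rw [h0])
  constructor
  · intro hα
    by_cases h0 : α ⟨0, hn⟩ = none
    · left; simpa [pdom] using h0
    · right
      obtain ⟨b, hb⟩ := Option.ne_none_iff_exists'.mp h0
      by_cases hb0 : b = ⟨0, hn⟩
      · left
        refine ⟨hb0 ▸ hb, ?_⟩
        intro x a hx ha
        have he : edge x (⟨0, hn⟩ : Fin n) := Or.inr ⟨rfl, (hz x).mp hx⟩
        have := hα x ⟨0, hn⟩ a b ha hb he
        rw [hb0] at this
        rcases this with ⟨h1, h2⟩ | ⟨h1, h2⟩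
        · exact absurd rfl h2
        · exact (hz a).mpr h2
      · right
        refine ⟨b, hb, hb0, ?_⟩
        intro x a hx ha
        have he : edge x (⟨0, hn⟩ : Fin n) := Or.inr ⟨rfl, (hz x).mp hx⟩
        have := hα x ⟨0, hn⟩ a b ha hb he
        rcases this with ⟨h1, h2⟩ | ⟨h1, h2⟩
        · exact Fin.ext h1
        · exact absurd (Fin.ext h1) hb0
  · rintro (h | ⟨h0, hmap⟩ | ⟨b, hb, hb0, hmap⟩) <;> intro u v a c hu hv he
    · exfalso
      rcases he with ⟨h1, h2⟩ | ⟨h1, h2⟩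
      · have : u = ⟨0, hn⟩ := Fin.ext h1
        exact h (by simp [pdom, this ▸ hu])
      · have : v = ⟨0, hn⟩ := Fin.ext h1
        exact h (by simp [pdom, this ▸ hv])
    · rcases he with ⟨h1, h2⟩ | ⟨h1, h2⟩
      · have hu0 : u = ⟨0, hn⟩ := Fin.ext h1
        have ha : a = ⟨0, hn⟩ := by
          rw [hu0, h0] at hu; exact (Option.some_inj.mp hu).symm
        have hc : c ≠ ⟨0, hn⟩ := hmap v c ((hz v).mpr h2) hv
        exact Or.inl ⟨by rw [ha], (hz c).mp hc⟩
      · have hv0 : v = ⟨0, hn⟩ := Fin.ext h1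
        have hc : c = ⟨0, hn⟩ := by
          rw [hv0, h0] at hv; exact (Option.some_inj.mp hv).symm
        have ha : a ≠ ⟨0, hn⟩ := hmap u a ((hz u).mpr h2) hu
        exact Or.inr ⟨by rw [hc], (hz a).mp ha⟩
    · rcases he with ⟨h1, h2⟩ | ⟨h1, h2⟩
      · have hu0 : u = ⟨0, hn⟩ := Fin.ext h1
        have ha : a = b := by
          rw [hu0, hb] at hu; exact (Option.some_inj.mp hu).symm
        have hc : c = ⟨0, hn⟩ := hmap v c ((hz v).mpr h2) hv
        exact Or.inr ⟨by rw [hc], (hz a).mp (ha ▸ hb0)⟩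
      · have hv0 : v = ⟨0, hn⟩ := Fin.ext h1
        have hc : c = b := by
          rw [hv0, hb] at hv; exact (Option.some_inj.mp hv).symm
        have ha : a = ⟨0, hn⟩ := hmap u a ((hz u).mpr h2) hu
        exact Or.inl ⟨by rw [ha], (hz c).mp (hc ▸ hb0)⟩
end

section
/- Let n ≥ 1 and let S_n be the star graph on vertices {0,1,...,n-1}. A partial transformation α of {0,1,...,n-1} is a partial strong endomorphism of S_n if and only if one of the following holds: (1) 0 ∉ dom(α) and either im(α) = {0} or im(α) ⊆ {1,...,n-1}; (2) 0 ∈ dom(α), 0α = 0, and α maps dom(α) ∩ {1,...,n-1} into {1,...,n-1}; (3) 0 ∈ dom(α), 0α ≠ 0, and α maps dom(α) ∩ {1,...,n-1} into {0}. -/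
/-!
The star graph is the complete bipartite graph with parts `{0}` and `{1, …, n-1}`: two vertices
are adjacent exactly when one of them is the centre and the other is not. For such a graph,
`α` is a partial strong endomorphism iff "`x` and `xα` lie in the same part" has the same truth
value for every `x ∈ dom α`, i.e. iff `α` preserves both parts or swaps them. The three cases of
the theorem are these two alternatives, split according to whether the centre is in `dom α`.
-/

section Bipartite

variable {V : Type*}

def PreservesParts (P : V → Prop) (α : V → Option V) : Prop :=
  ∀ x a, α x = some a → (P x ↔ P a)

def SwapsParts (P : V → Prop) (α : V → Option V) : Prop :=
  ∀ x a, α x = some a → (P x ↔ ¬P a)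

theorem partialStrongEnd_completeBipartite_iff (P : V → Prop) (α : V → Option V) :
    (∀ u v a b, α u = some a → α v = some b → (¬(P u ↔ P v) ↔ ¬(P a ↔ P b))) ↔
      PreservesParts P α ∨ SwapsParts P α := by
  constructor
  · intro h
    by_contra! hcon
    simp only [PreservesParts, SwapsParts, not_forall] at hcon
    obtain ⟨⟨x, a, hxa, hpres⟩, ⟨y, b, hyb, hswap⟩⟩ := hcon
    have := h x y a b hxa hyb
    tauto
  · rintro (h | h) u v a b hua hvb
    all_goals
      have := h u a hua
      have := h v b hvb
      tauto

theorem notMem_pdom_iff {α : V → Option V} {x : V} : x ∉ pdom α ↔ α x = none := by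
  simp [pdom]

theorem preservesParts_eq_iff (c : V) (α : V → Option V) :
    PreservesParts (· = c) α ↔
      (c ∉ pdom α ∧ pim α ⊆ {x | x ≠ c}) ∨
        (α c = some c ∧ ∀ x a, x ≠ c → α x = some a → a ≠ c) := by
  rw [notMem_pdom_iff]
  constructor
  · intro h
    rcases h0 : α c with _ | b
    · refine Or.inl ⟨rfl, ?_⟩
      rintro y ⟨x, hxy⟩ hyc
      have hxc : x = c := (h x y hxy).2 hyc
      simp [hxc, h0] at hxy
    · obtain rfl : b = c := (h c b h0).1 rfl
      exact Or.inr ⟨rfl, fun x a hx hxa hac => hx ((h x a hxa).2 hac)⟩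
  · rintro (⟨h0, him⟩ | ⟨h0, hne⟩) x a hxa
    · have hxc : x ≠ c := by rintro rfl; simp [h0] at hxa
      exact iff_of_false hxc (him ⟨x, hxa⟩)
    · by_cases hxc : x = c
      · subst hxc
        obtain rfl : a = x := Option.some_inj.mp (hxa.symm.trans h0)
        exact iff_of_true rfl rfl
      · exact iff_of_false hxc (hne x a hxc hxa)

theorem swapsParts_eq_iff (c : V) (α : V → Option V) :
    SwapsParts (· = c) α ↔
      (c ∉ pdom α ∧ pim α ⊆ {c}) ∨
        (∃ b, α c = some b ∧ b ≠ c ∧ ∀ x a, x ≠ c → α x = some a → a = c) := by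
  rw [notMem_pdom_iff]
  constructor
  · intro h
    rcases h0 : α c with _ | b
    · refine Or.inl ⟨rfl, ?_⟩
      rintro y ⟨x, hxy⟩
      by_contra hyc
      have hxc : x = c := (h x y hxy).2 hyc
      simp [hxc, h0] at hxy
    · exact Or.inr ⟨b, rfl, (h c b h0).1 rfl, fun x a hx hxa => not_not.mp (mt (h x a hxa).2 hx)⟩
  · rintro (⟨h0, him⟩ | ⟨b, h0, hbc, hmap⟩) x a hxa
    · have hxc : x ≠ c := by rintro rfl; simp [h0] at hxa
      exact iff_of_false hxc (not_not.mpr (him ⟨x, hxa⟩))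
    · by_cases hxc : x = c
      · subst hxc
        obtain rfl : a = b := Option.some_inj.mp (hxa.symm.trans h0)
        exact iff_of_true rfl hbc
      · exact iff_of_false hxc (not_not.mpr (hmap x a hxc hxa))

end Bipartite

theorem edge_iff_center {n : ℕ} (c : Fin n) (hc : c.val = 0) (u v : Fin n) :
    edge u v ↔ ¬(u = c ↔ v = c) := by
  simp only [edge, Fin.ext_iff, hc]
  tauto

theorem isPsEnd_iff_preservesParts_or_swapsParts {n : ℕ} (c : Fin n) (hc : c.val = 0)
    (α : Fin n → Option (Fin n)) :
    IsPsEnd α ↔ PreservesParts (· = c) α ∨ SwapsParts (· = c) α := by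
  simp only [IsPsEnd, edge_iff_center c hc]
  exact partialStrongEnd_completeBipartite_iff _ α

theorem stmt4 (n : ℕ) (hn : 1 ≤ n) (α : Fin n → Option (Fin n)) :
    IsPsEnd α ↔
      (((⟨0, hn⟩ : Fin n) ∉ pdom α
          ∧ (pim α = {(⟨0, hn⟩ : Fin n)} ∨ pim α ⊆ {x : Fin n | x ≠ ⟨0, hn⟩}))
        ∨ (α ⟨0, hn⟩ = some ⟨0, hn⟩
            ∧ ∀ x a : Fin n, x ≠ ⟨0, hn⟩ → α x = some a → a ≠ ⟨0, hn⟩)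
        ∨ (∃ b : Fin n, α ⟨0, hn⟩ = some b ∧ b ≠ ⟨0, hn⟩
            ∧ ∀ x a : Fin n, x ≠ ⟨0, hn⟩ → α x = some a → a = ⟨0, hn⟩)) := by
  set c : Fin n := ⟨0, hn⟩
  rw [isPsEnd_iff_preservesParts_or_swapsParts c rfl, preservesParts_eq_iff, swapsParts_eq_iff,
    Set.subset_singleton_iff_eq]
  have hempty : pim α = ∅ → pim α ⊆ {x | x ≠ c} := fun h => h ▸ Set.empty_subset _
  tauto
end

section
/- Let n ≥ 1 and let S_n be the star graph on vertices {0,1,...,n-1}. A partial transformation α of {0,1,...,n-1} is a partial strong weak endomorphism of S_n if and only if one of the following holds: (1) 0 ∉ dom(α) and either im(α) = {0} or im(α) ⊆ {1,...,n-1}; (2) 0 ∈ dom(α), 0α = 0, and either im(α) = {0} or α maps dom(α) ∩ {1,...,n-1} into {1,...,n-1}; (3) 0 ∈ dom(α), 0α ≠ 0, and either im(α) = {0α} or α maps dom(α) ∩ {1,...,n-1} onto a subset of {0} with dom(α) ∩ {1,...,n-1} mapping to {0}. -/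
/-!
On the star graph two vertices are adjacent exactly when one of them is the centre and the other
is not. Pairs of leaves are never adjacent, so their images must never be adjacent either: the
images of the leaves all lie on the same side (all equal to the centre, or all leaves). A pair
(centre, leaf) is adjacent, so if the centre is sent to a leaf `c`, every leaf must go to `c` or to
the centre. Together with the image of the centre, these two conditions give the three cases.
-/

theorem Set.forall₂_iff_iff_forall_or_forall_not {V : Type*} {s : Set V} {p : V → Prop} :
    (∀ a ∈ s, ∀ b ∈ s, (p a ↔ p b)) ↔ (∀ a ∈ s, p a) ∨ ∀ a ∈ s, ¬p a := by
  grind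

theorem Set.insert_eq_singleton_iff_subset {V : Type*} {s : Set V} {c : V} :
    insert c s = {c} ↔ s ⊆ {c} := by
  rw [Set.Subset.antisymm_iff, Set.insert_subset_iff]
  simp

section Star

variable {V : Type*} (z : V) (α : V → Option V)

/-- `IsPswEnd` for the star graph with centre `z` on an arbitrary vertex type `V`. -/
def IsStarPswEnd : Prop :=
  ∀ u v a b, α u = some a → α v = some b → ((¬(u = z ↔ v = z) ∧ a ≠ b) ↔ ¬(a = z ↔ b = z))

def leafIm : Set V := {a | ∃ x, x ≠ z ∧ α x = some a}

variable {z α}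

theorem leafIm_subset_iff {s : Set V} :
    leafIm z α ⊆ s ↔ ∀ x a, x ≠ z → α x = some a → a ∈ s := by
  simp only [leafIm, Set.subset_def, Set.mem_ofPred_eq]
  grind

theorem pim_eq_leafIm_of_center_none (h : α z = none) : pim α = leafIm z α := by
  ext a
  simp only [pim, leafIm, Set.mem_ofPred_eq]
  grind

theorem pim_eq_insert_leafIm_of_center_some {c : V} (h : α z = some c) :
    pim α = insert c (leafIm z α) := by
  ext a
  simp only [pim, leafIm, Set.mem_insert_iff, Set.mem_ofPred_eq]
  grind

theorem isStarPswEnd_iff :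
    IsStarPswEnd z α ↔ (leafIm z α ⊆ {z} ∨ leafIm z α ⊆ {z}ᶜ) ∧
      ∀ c, α z = some c → c ≠ z → leafIm z α ⊆ {c, z} := by
  constructor
  · intro h
    refine ⟨?_, ?_⟩
    · have hpair : ∀ a ∈ leafIm z α, ∀ b ∈ leafIm z α, (a = z ↔ b = z) := by
        rintro a ⟨x, hx, ha⟩ b ⟨y, hy, hb⟩
        by_contra hab
        exact ((h x y a b ha hb).2 hab).1 (by tauto)
      simpa only [Set.subset_def, Set.mem_singleton_iff, Set.mem_compl_iff] using
        Set.forall₂_iff_iff_forall_or_forall_not.1 hpair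
    · rintro c hc hcz a ⟨x, hx, ha⟩
      have := h z x c a hc ha
      grind
  · rintro ⟨hside, hcenter⟩ u v a b hu hv
    have hleaf : ∀ {x d}, x ≠ z → α x = some d → d ∈ leafIm z α := fun hx hd => ⟨_, hx, hd⟩
    -- a pair of leaves is settled by `hside`, a pair (centre, leaf) by `hcenter`
    grind

theorem isStarPswEnd_iff_of_center_none (h0 : α z = none) :
    IsStarPswEnd z α ↔ pim α = {z} ∨ pim α ⊆ {x | x ≠ z} := by
  rw [isStarPswEnd_iff, pim_eq_leafIm_of_center_none h0, Set.subset_singleton_iff_eq,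
    ← Set.compl_singleton_eq]
  simp only [h0, reduceCtorEq, false_implies, implies_true, and_true]
  grind [Set.empty_subset]

theorem isStarPswEnd_iff_of_center_fixed (h0 : α z = some z) :
    IsStarPswEnd z α ↔ pim α = {z} ∨ ∀ x a, x ≠ z → α x = some a → a ≠ z := by
  rw [isStarPswEnd_iff, pim_eq_insert_leafIm_of_center_some h0,
    Set.insert_eq_singleton_iff_subset, leafIm_subset_iff (s := {z}ᶜ)]
  simp [h0]

theorem isStarPswEnd_iff_of_center_to_leaf {c : V} (h0 : α z = some c) (hc : c ≠ z) :
    IsStarPswEnd z α ↔ pim α = {c} ∨ ∀ x a, x ≠ z → α x = some a → a = z := by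
  rw [isStarPswEnd_iff, pim_eq_insert_leafIm_of_center_some h0,
    Set.insert_eq_singleton_iff_subset]
  simp only [leafIm_subset_iff, h0, Option.some.injEq, forall_eq', Set.mem_singleton_iff,
    Set.mem_compl_iff, Set.mem_insert_iff]
  grind

end Star

theorem edge_iff_of_val_eq_zero {n : ℕ} {z : Fin n} (hz : z.val = 0) (u v : Fin n) :
    edge u v ↔ ¬(u = z ↔ v = z) := by
  simp only [edge, Fin.ext_iff, hz]
  tauto

theorem isPswEnd_iff_isStarPswEnd {n : ℕ} {z : Fin n} (hz : z.val = 0)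
    (α : Fin n → Option (Fin n)) :
    IsPswEnd α ↔ IsStarPswEnd z α := by
  simp only [IsPswEnd, IsStarPswEnd, edge_iff_of_val_eq_zero hz]

theorem stmt6 (n : ℕ) (hn : 1 ≤ n) (α : Fin n → Option (Fin n)) :
    IsPswEnd α ↔
      (((⟨0, hn⟩ : Fin n) ∉ pdom α
          ∧ (pim α = {(⟨0, hn⟩ : Fin n)} ∨ pim α ⊆ {x : Fin n | x ≠ ⟨0, hn⟩}))
        ∨ (α ⟨0, hn⟩ = some ⟨0, hn⟩
            ∧ (pim α = {(⟨0, hn⟩ : Fin n)}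
                ∨ ∀ x a : Fin n, x ≠ ⟨0, hn⟩ → α x = some a → a ≠ ⟨0, hn⟩))
        ∨ (∃ b : Fin n, α ⟨0, hn⟩ = some b ∧ b ≠ ⟨0, hn⟩
            ∧ (pim α = {b}
                ∨ ∀ x a : Fin n, x ≠ ⟨0, hn⟩ → α x = some a → a = ⟨0, hn⟩))) := by
  set z : Fin n := ⟨0, hn⟩
  rw [isPswEnd_iff_isStarPswEnd (z := z) rfl]
  rcases h0 : α z with _ | c
  · simpa [pdom, h0] using isStarPswEnd_iff_of_center_none h0
  · by_cases hc : c = z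
    · subst hc
      simpa [pdom, h0] using isStarPswEnd_iff_of_center_fixed h0
    · simpa [pdom, h0, hc] using isStarPswEnd_iff_of_center_to_leaf h0 hc
end

section
/- Let n ≥ 1 and let S_n be the star graph on vertices {0,1,...,n-1}. An injective partial transformation α of {0,1,...,n-1} is a partial automorphism of S_n if and only if one of the following holds: (1) 0 ∉ dom(α) and either im(α) = {0} or im(α) ⊆ {1,...,n-1}; (2) 0 ∈ dom(α) and 0α = 0; (3) 0 ∈ dom(α), 0α ≠ 0, and α maps dom(α) ∩ {1,...,n-1} into {0}. -/
/-! Write `c = 0` for the center of `S_n`. An edge joins `u` and `v` exactly when one of them is `c`,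
so `α` is a partial automorphism iff `xor (u = c) (v = c) ↔ xor (uα = c) (vα = c)` for all
`u, v ∈ dom α`. This says that whether `α` keeps a vertex on its side of the partition `{c}`,
`V ∖ {c}` does not depend on the vertex: either `α` preserves the center and the leaves, or it
swaps them. Injectivity then leaves the three cases of the theorem. -/

theorem forall_xor_iff_xor_iff {V W : Type*} (f : V → Option W) (P : V → Prop) (Q : W → Prop) :
    (∀ u v a b, f u = some a → f v = some b → (Xor (P u) (P v) ↔ Xor (Q a) (Q b))) ↔
      (∀ u a, f u = some a → (P u ↔ Q a)) ∨ (∀ u a, f u = some a → (P u ↔ ¬Q a)) := by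
  constructor
  · intro h
    by_contra! hne
    obtain ⟨⟨u, a, hu, hua⟩, ⟨v, b, hv, hvb⟩⟩ := hne
    have := h u v a b hu hv
    simp only [Xor] at this hua hvb
    tauto
  · rintro (h | h) u v a b hu hv <;>
    · have := h u a hu
      have := h v b hv
      simp only [Xor]
      tauto

theorem subset_ne_or_subset_singleton_iff {V : Type*} (s : Set V) (c : V) :
    s ⊆ {x | x ≠ c} ∨ s ⊆ {c} ↔ s = {c} ∨ s ⊆ {x | x ≠ c} := by
  rw [Set.subset_singleton_iff_eq]
  constructor
  · rintro (h | rfl | h)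
    · exact Or.inr h
    · exact Or.inr (Set.empty_subset _)
    · exact Or.inl h
  · tauto

section Center

variable {V : Type*} (α : V → Option V) (c : V)

def PreservesCenter : Prop := ∀ x a, α x = some a → (x = c ↔ a = c)

def SwapsCenter : Prop := ∀ x a, α x = some a → (x = c ↔ a ≠ c)

variable {α c}

theorem preservesCenter_iff (hα : PInj α) :
    PreservesCenter α c ↔ (c ∉ pdom α ∧ pim α ⊆ {x | x ≠ c}) ∨ α c = some c := by
  constructor
  · intro h
    rcases hc : α c with _ | b
    · refine Or.inl ⟨fun hdom => hdom hc, ?_⟩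
      rintro a ⟨x, hx⟩ hac
      have hxc : x = c := (h x a hx).mpr hac
      simp [hxc, hc] at hx
    · exact Or.inr (congrArg some ((h c b hc).mp rfl))
  · rintro (⟨hdom, him⟩ | hc) x a hx
    · have hxc : x ≠ c := fun hxc => hdom (by simp [pdom, ← hxc, hx])
      exact iff_of_false hxc (him ⟨x, hx⟩)
    · constructor
      · intro hxc
        rw [hxc, hc, Option.some_inj] at hx
        exact hx.symm
      · intro hac
        rw [hac] at hx
        exact hα x c c hx hc

theorem swapsCenter_iff :
    SwapsCenter α c ↔ (c ∉ pdom α ∧ pim α ⊆ {c}) ∨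
      ∃ b, α c = some b ∧ b ≠ c ∧ ∀ x a, x ≠ c → α x = some a → a = c := by
  have leaf_to_center (h : SwapsCenter α c) x a (hxc : x ≠ c) (hx : α x = some a) : a = c :=
    not_not.mp (mt (h x a hx).mpr hxc)
  constructor
  · intro h
    rcases hc : α c with _ | b
    · refine Or.inl ⟨fun hdom => hdom hc, ?_⟩
      rintro a ⟨x, hx⟩
      have hxc : x ≠ c := fun hxc => by simp [hxc, hc] at hx
      exact leaf_to_center h x a hxc hx
    · exact Or.inr ⟨b, rfl, (h c b hc).mp rfl, leaf_to_center h⟩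
  · rintro (⟨hdom, him⟩ | ⟨b, hc, hbc, hleaf⟩) x a hx
    · have hxc : x ≠ c := fun hxc => hdom (by simp [pdom, ← hxc, hx])
      exact iff_of_false hxc (not_not.mpr (him ⟨x, hx⟩))
    · by_cases hxc : x = c
      · rw [hxc, hc, Option.some_inj] at hx
        exact iff_of_true hxc (hx ▸ hbc)
      · exact iff_of_false hxc (not_not.mpr (hleaf x a hxc hx))

end Center

theorem edge_iff_xor {n : ℕ} (hn : 1 ≤ n) (u v : Fin n) :
    edge u v ↔ Xor (u = ⟨0, hn⟩) (v = ⟨0, hn⟩) := by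
  simp only [edge, Xor, Fin.ext_iff]

theorem isPsEnd_iff_preservesCenter_or_swapsCenter {n : ℕ} (hn : 1 ≤ n)
    (α : Fin n → Option (Fin n)) :
    IsPsEnd α ↔ PreservesCenter α ⟨0, hn⟩ ∨ SwapsCenter α ⟨0, hn⟩ := by
  simp only [IsPsEnd, edge_iff_xor hn]
  exact forall_xor_iff_xor_iff α _ _

theorem stmt8 (n : ℕ) (hn : 1 ≤ n) (α : Fin n → Option (Fin n)) (hinj : PInj α) :
    α ∈ PAutS n ↔
      (((⟨0, hn⟩ : Fin n) ∉ pdom α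
          ∧ (pim α = {(⟨0, hn⟩ : Fin n)} ∨ pim α ⊆ {x : Fin n | x ≠ ⟨0, hn⟩}))
        ∨ α ⟨0, hn⟩ = some ⟨0, hn⟩
        ∨ (∃ b : Fin n, α ⟨0, hn⟩ = some b ∧ b ≠ ⟨0, hn⟩
            ∧ ∀ x a : Fin n, x ≠ ⟨0, hn⟩ → α x = some a → a = ⟨0, hn⟩)) := by
  change PInj α ∧ IsPsEnd α ↔ _
  rw [and_iff_right hinj, isPsEnd_iff_preservesCenter_or_swapsCenter hn,
    preservesCenter_iff hinj, swapsCenter_iff, ← subset_ne_or_subset_singleton_iff]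
  tauto
end

section
/- Let n ≥ 1 and let S_n be the star graph on vertices {0,1,...,n-1}. The number of injective partial endomorphisms of S_n equals 3 + 3n² − 4n + Σ_{k=2}^{n-1} (C(n,k) + C(n-1,k))·C(n-1,k)·k!. -/
/-!
An injective partial endomorphism `α` of the star on `Fin (m + 1)` is determined by `o = α 0` and
its restriction `t` to the leaves. Since the leaves are pairwise non-adjacent, all adjacent to the
centre, and no vertex is adjacent to itself, `α` is one exactly when `t` is a partial injection with
image in the neighbourhood of `o` (everything when `o = none`): `m + 1`, `m` or `1` vertices
according as `o` is `none`, the centre or a leaf. A partial injection from an `a`-set into a `b`-set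
is a `k`-subset of the domain with an embedding of it, so there are
`∑ k, a.choose k * b.descFactorial k` of them; adding up the three cases gives the formula.
-/

section PartialInjection

variable {α β : Type*}

def PartialInjective (f : α → Option β) : Prop :=
  ∀ u v b, f u = some b → f v = some b → u = v

def partialInjectionsInto (α : Type*) (S : Set β) : Set (α → Option β) :=
  {f | PartialInjective f ∧ ∀ x b, f x = some b → b ∈ S}

def numPartialInjections (a b : ℕ) : ℕ :=
  ∑ k ∈ Finset.range (a + 1), a.choose k * b.descFactorial k

theorem partialInjective_cons_iff {n : ℕ} (o : Option β) (t : Fin n → Option β) :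
    PartialInjective (Fin.cons o t : Fin (n + 1) → Option β) ↔
      PartialInjective t ∧ ∀ c ∈ o, ∀ x, t x ≠ some c := by
  simp only [PartialInjective, Fin.forall_fin_succ, Fin.cons_zero, Fin.cons_succ,
    Fin.succ_ne_zero, (Fin.succ_ne_zero _).symm, Fin.succ_inj, Option.mem_def]
  constructor
  · rintro ⟨⟨-, hzero⟩, hsucc⟩
    exact ⟨fun u v => (hsucc u).2 v, fun c hc x hx => hzero x c hc hx⟩
  · rintro ⟨ht, ho⟩
    exact ⟨⟨fun _ _ _ => trivial, fun x c hc hx => ho c hc x hx⟩,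
      fun x => ⟨fun c hx hc => ho c hc x hx, ht x⟩⟩

variable [Fintype α]

def partialDomain (f : α → Option β) : Finset α := {x | (f x).isSome}

theorem mem_partialDomain {f : α → Option β} {x : α} : x ∈ partialDomain f ↔ (f x).isSome := by
  simp [partialDomain]

noncomputable def partialInjectionsIntoDomainEquiv [DecidableEq α] (S : Set β) (s : Finset α) :
    {f : partialInjectionsInto α S // partialDomain f.1 = s} ≃ (s ↪ S) where
  toFun f :=
    have hdom (x : s) : (f.1.1 x).isSome := by rw [← mem_partialDomain, f.2]; exact x.2
    { toFun x := ⟨(f.1.1 x).get (hdom x), f.1.2.2 x _ (Option.some_get _).symm⟩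
      inj' x y hxy := by
        have hxy : (f.1.1 x).get (hdom x) = (f.1.1 y).get (hdom y) := congrArg Subtype.val hxy
        exact Subtype.ext <| f.1.2.1 x y _ (Option.some_get _).symm (by rw [hxy, Option.some_get]) }
  invFun e := ⟨⟨fun x => if h : x ∈ s then some (e ⟨x, h⟩) else none, by
      constructor
      · intro u v b hu hv
        by_cases hu' : u ∈ s <;> by_cases hv' : v ∈ s <;>
          simp only [hu', hv', dif_pos, dif_neg, reduceCtorEq, not_false_eq_true,
            Option.some_inj] at hu hv
        exact congrArg Subtype.val (e.injective (Subtype.ext (hu.trans hv.symm)))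
      · intro x b hx
        by_cases h : x ∈ s <;>
          simp only [h, dif_pos, dif_neg, reduceCtorEq, not_false_eq_true, Option.some_inj] at hx
        exact hx ▸ (e _).2⟩, by ext x; by_cases h : x ∈ s <;> simp [mem_partialDomain, h]⟩
  left_inv f := by
    ext x : 3
    by_cases h : x ∈ s
    · simp only [h, dif_pos]
      exact Option.some_get _
    · have hx : f.1.1 x = none := by
        rwa [← Option.not_isSome_iff_eq_none, ← mem_partialDomain, f.2]
      simp only [h, dif_neg, hx, not_false_eq_true]
  right_inv e := by
    ext x
    simp

theorem ncard_partialInjectionsInto [Finite β] (S : Set β) :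
    (partialInjectionsInto α S).ncard = numPartialInjections (Fintype.card α) (Nat.card S) := by
  classical
  have : Fintype β := Fintype.ofFinite β
  rw [← Nat.card_coe_set_eq,
    ← Nat.card_congr (Equiv.sigmaFiberEquiv fun f : partialInjectionsInto α S => partialDomain f.1),
    Nat.card_sigma]
  simp_rw [Nat.card_congr (partialInjectionsIntoDomainEquiv S _), Nat.card_eq_fintype_card,
    Fintype.card_embedding_eq, Fintype.card_coe]
  rw [← Finset.powerset_univ, Finset.sum_powerset_apply_card, Finset.card_univ]
  simp only [smul_eq_mul, numPartialInjections]

end PartialInjection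

theorem numPartialInjections_one (a : ℕ) : numPartialInjections a 1 = a + 1 := by
  rcases a with _ | a
  · simp [numPartialInjections]
  · rw [numPartialInjections, Finset.sum_range_succ', Finset.sum_range_succ']
    simp

theorem numPartialInjections_succ_add_self (m : ℕ) :
    numPartialInjections m (m + 1) + numPartialInjections m m =
      ∑ k ∈ Finset.range (m + 1), ((m + 1).choose k + m.choose k) * m.choose k * k.factorial := by
  simp only [numPartialInjections, ← Finset.sum_add_distrib,
    Nat.descFactorial_eq_factorial_mul_choose]
  exact Finset.sum_congr rfl fun k _ => by ring

theorem sum_range_choose_factorial_add_mul_succ (m : ℕ) :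
    ∑ k ∈ Finset.range (m + 1), ((m + 1).choose k + m.choose k) * m.choose k * k.factorial +
        m * (m + 1) =
      3 + 3 * (m + 1) ^ 2 - 4 * (m + 1) +
        ∑ k ∈ Finset.Icc 2 m, ((m + 1).choose k + m.choose k) * m.choose k * k.factorial := by
  have hconst : 3 + 3 * (m + 1) ^ 2 - 4 * (m + 1) = 3 * m ^ 2 + 2 * m + 2 := by
    rw [Nat.sub_eq_iff_eq_add (by nlinarith)]
    ring
  rw [hconst]
  rcases m with _ | m
  · simp
  · rw [← Finset.Ico_add_one_right_eq_Icc, Finset.range_eq_Ico,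
      ← Finset.sum_Ico_consecutive _ (Nat.zero_le 2) (by omega : 2 ≤ m + 1 + 1),
      ← Finset.range_eq_Ico, Finset.sum_range_succ, Finset.sum_range_one]
    simp only [Nat.choose_zero_right, Nat.choose_one_right, Nat.factorial_zero,
      Nat.factorial_one, mul_one]
    ring

section StarGraph

theorem edge_comm {n : ℕ} {u v : Fin n} : edge u v ↔ edge v u := Or.comm

theorem edge_irrefl {n : ℕ} (u : Fin n) : ¬ edge u u := by
  rintro (⟨h, h'⟩ | ⟨h, h'⟩) <;> exact h' h

variable {m : ℕ}

theorem edge_zero_iff {b : Fin (m + 1)} : edge 0 b ↔ b ≠ 0 := by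
  simp only [edge, ne_eq, Fin.ext_iff, Fin.val_zero, not_true_eq_false, and_false, or_false,
    true_and]

theorem edge_succ_iff {y : Fin m} {b : Fin (m + 1)} : edge y.succ b ↔ b = 0 := by
  simp only [edge, ne_eq, Fin.ext_iff, Fin.val_succ, Fin.val_zero]
  omega

theorem ncard_edge_zero : {b : Fin (m + 1) | edge 0 b}.ncard = m := by
  simp only [edge_zero_iff, Set.ncard_eq_toFinset_card', Set.toFinset_ofPred, Finset.filter_ne',
    Finset.mem_univ, Finset.card_erase_of_mem, Finset.card_univ, Fintype.card_fin,
    Nat.add_sub_cancel]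

theorem ncard_edge_succ (y : Fin m) : {b : Fin (m + 1) | edge y.succ b}.ncard = 1 := by
  simp only [edge_succ_iff, Set.ofPred_eq_eq_singleton, Set.ncard_singleton]

theorem isPEnd_cons_iff (o : Option (Fin (m + 1))) (t : Fin m → Option (Fin (m + 1))) :
    IsPEnd (Fin.cons o t : Fin (m + 1) → Option (Fin (m + 1))) ↔
      ∀ c ∈ o, ∀ x b, t x = some b → edge c b := by
  constructor
  · intro h c hc x b hx
    exact h 0 x.succ c b hc hx (edge_zero_iff.2 x.succ_ne_zero)
  · intro h u v a b hu hv huv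
    induction u using Fin.cases with
    | zero =>
      induction v using Fin.cases with
      | zero => exact absurd huv (edge_irrefl 0)
      | succ y => exact h a hu y b hv
    | succ x =>
      induction v using Fin.cases with
      | zero => exact edge_comm.1 (h b hv x a hu)
      | succ y => exact absurd (edge_succ_iff.1 huv) y.succ_ne_zero

theorem cons_mem_IEndS_iff (o : Option (Fin (m + 1))) (t : Fin m → Option (Fin (m + 1))) :
    Fin.cons o t ∈ IEndS (m + 1) ↔
      t ∈ partialInjectionsInto (Fin m) {b | ∀ c ∈ o, edge c b} := by
  change PartialInjective _ ∧ IsPEnd _ ↔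
    PartialInjective t ∧ ∀ x b, t x = some b → ∀ c ∈ o, edge c b
  rw [partialInjective_cons_iff, isPEnd_cons_iff]
  constructor
  · rintro ⟨⟨ht, -⟩, hedge⟩
    exact ⟨ht, fun x b hx c hc => hedge c hc x b hx⟩
  · rintro ⟨ht, hedge⟩
    exact ⟨⟨ht, fun c hc x hx => edge_irrefl c (hedge x c hx c hc)⟩,
      fun c hc x b hx => hedge x b hx c hc⟩

def iEndSSuccEquiv (m : ℕ) :
    IEndS (m + 1) ≃
      Σ o : Option (Fin (m + 1)), partialInjectionsInto (Fin m) {b | ∀ c ∈ o, edge c b} :=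
  ((Equiv.subtypeProdEquivSigmaSubtype fun o t =>
      t ∈ partialInjectionsInto (Fin m) {b | ∀ c ∈ o, edge c b}).symm.trans
    (Equiv.subtypeEquiv (Fin.consEquiv fun _ => Option (Fin (m + 1)))
      fun p => (cons_mem_IEndS_iff p.1 p.2).symm)).symm

theorem ncard_IEndS_succ (m : ℕ) :
    (IEndS (m + 1)).ncard =
      numPartialInjections m (m + 1) + (numPartialInjections m m + m * numPartialInjections m 1) := by
  rw [← Nat.card_coe_set_eq, Nat.card_congr (iEndSSuccEquiv m), Nat.card_sigma,
    Fintype.sum_option, Fin.sum_univ_succ]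
  simp only [Nat.card_coe_set_eq, ncard_partialInjectionsInto, Fintype.card_fin, Option.mem_def,
    Option.some_inj, forall_eq', reduceCtorEq, IsEmpty.forall_iff, implies_true, Set.ofPred_true,
    Set.fintypeCard_eq_ncard, Set.ncard_univ, Nat.card_eq_fintype_card, ncard_edge_zero,
    ncard_edge_succ, Finset.sum_const, Finset.card_univ, smul_eq_mul]

end StarGraph

theorem stmt9 (n : ℕ) (hn : 1 ≤ n) :
    (IEndS n).ncard =
      3 + 3 * n ^ 2 - 4 * n +
        ∑ k ∈ Finset.Icc 2 (n - 1),
          (Nat.choose n k + Nat.choose (n - 1) k) * Nat.choose (n - 1) k * Nat.factorial k := by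
  obtain ⟨m, rfl⟩ := Nat.exists_eq_add_of_le' hn
  rw [ncard_IEndS_succ, numPartialInjections_one, ← add_assoc, numPartialInjections_succ_add_self,
    Nat.add_sub_cancel]
  exact sum_range_choose_factorial_add_mul_succ m
end

section
/- Let n ≥ 1, let S_n be the star graph on vertices {0,1,...,n-1}, and let α be a partial weak endomorphism of S_n. If α is a regular element of the monoid PwEnd(S_n) of all partial weak endomorphisms of S_n under composition, then 0 ∈ dom(α) or im(α) = {0} or 0 ∉ im(α). -/
/-!
If `α = αβα` and `0 ∉ dom α`, then `β` must send each point of `im α` into its `α`-fibre, so it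
maps `0` and any leaf `c ∈ im α` to two distinct vertices outside the centre. Since `β` is a weak
endomorphism, those two vertices would have to be adjacent, but two leaves of a star never are.
-/

lemma exists_apply_eq_some_of_pmul_pmul_eq {V : Type*} {α β : V → Option V}
    (h : pmul (pmul α β) α = α) {x a : V} (hx : α x = some a) :
    ∃ w, β a = some w ∧ α w = some a := by
  have hxx := congrFun h x
  simp only [pmul, hx, Option.bind_some] at hxx
  exact Option.bind_eq_some_iff.mp hxx

lemma edge.val_eq_zero_or {n : ℕ} {u v : Fin n} (h : edge u v) : u.val = 0 ∨ v.val = 0 := by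
  rcases h with ⟨hu, -⟩ | ⟨hv, -⟩
  · exact .inl hu
  · exact .inr hv

lemma edge.ne {n : ℕ} {u v : Fin n} (h : edge u v) : u ≠ v := by
  rintro rfl
  rcases h with ⟨h0, h1⟩ | ⟨h0, h1⟩ <;> exact h1 h0

lemma exists_center_mem_pdom_of_regularIn {n : ℕ} {α : Fin n → Option (Fin n)}
    (hreg : RegularIn (PwEndS n) α) {a b : Fin n} (ha : a ∈ pim α) (hb : b ∈ pim α)
    (hab : edge a b) : ∃ z ∈ pdom α, z.val = 0 := by
  obtain ⟨β, hβ, hαβα⟩ := hreg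
  obtain ⟨x, hx⟩ := ha
  obtain ⟨y, hy⟩ := hb
  obtain ⟨w, hβa, hαw⟩ := exists_apply_eq_some_of_pmul_pmul_eq hαβα hx
  obtain ⟨w', hβb, hαw'⟩ := exists_apply_eq_some_of_pmul_pmul_eq hαβα hy
  have hne : w ≠ w' := by
    rintro rfl
    exact hab.ne (Option.some_injective _ (hαw.symm.trans hαw'))
  rcases (hβ a b w w' hβa hβb hab hne).val_eq_zero_or with hw | hw
  · exact ⟨w, by simp [pdom, hαw], hw⟩
  · exact ⟨w', by simp [pdom, hαw'], hw⟩

theorem stmt10_general (n : ℕ) (hn : 1 ≤ n) (α : Fin n → Option (Fin n))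
    (hreg : RegularIn (PwEndS n) α) :
    (⟨0, hn⟩ : Fin n) ∈ pdom α ∨ pim α = {(⟨0, hn⟩ : Fin n)} ∨ (⟨0, hn⟩ : Fin n) ∉ pim α := by
  by_contra! ⟨hdom, hne, him⟩
  obtain ⟨c, hc, hc0⟩ : ∃ c ∈ pim α, c ≠ ⟨0, hn⟩ := by
    simpa [Set.eq_singleton_iff_unique_mem, him] using hne
  have hedge : edge (⟨0, hn⟩ : Fin n) c := .inl ⟨rfl, fun h => hc0 (Fin.ext h)⟩
  obtain ⟨z, hz, hz0⟩ := exists_center_mem_pdom_of_regularIn hreg him hc hedge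
  exact hdom (by rwa [show z = ⟨0, hn⟩ from Fin.ext hz0] at hz)

theorem stmt10 (n : ℕ) (hn : 1 ≤ n) (α : Fin n → Option (Fin n))
    (hα : α ∈ PwEndS n) (hreg : RegularIn (PwEndS n) α) :
    (⟨0, hn⟩ : Fin n) ∈ pdom α ∨ pim α = {(⟨0, hn⟩ : Fin n)} ∨ (⟨0, hn⟩ : Fin n) ∉ pim α :=
  stmt10_general n hn α hreg
end

section
/- For every simple graph G, the monoids PsEnd(G) of all partial strong endomorphisms of G and PswEnd(G) of all partial strong weak endomorphisms of G (under composition of partial transformations) are regular monoids. -/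
def IsPsEndG {V : Type*} (G : SimpleGraph V) (α : V → Option V) : Prop :=
  ∀ u v a b, α u = some a → α v = some b → (G.Adj u v ↔ G.Adj a b)

def IsPswEndG {V : Type*} (G : SimpleGraph V) (α : V → Option V) : Prop :=
  ∀ u v a b, α u = some a → α v = some b → ((G.Adj u v ∧ a ≠ b) ↔ G.Adj a b)


open Classical in
noncomputable def pinv {V : Type*} (α : V → Option V) : V → Option V :=
  fun y => if h : ∃ x, α x = some y then some (Classical.choose h) else none

lemma pinv_spec {V : Type*} (α : V → Option V) {y u : V} (h : pinv α y = some u) :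
    α u = some y := by
  unfold pinv at h
  split at h
  · rename_i hex
    cases h
    exact Classical.choose_spec hex
  · exact absurd h (by simp)

lemma pinv_some {V : Type*} (α : V → Option V) {x y : V} (h : α x = some y) :
    ∃ u, pinv α y = some u ∧ α u = some y := by
  have hex : ∃ x, α x = some y := ⟨x, h⟩
  exact ⟨Classical.choose hex, by simp [pinv, hex], Classical.choose_spec hex⟩

lemma pmul_pinv {V : Type*} (α : V → Option V) : pmul (pmul α (pinv α)) α = α := by
  funext x
  cases hx : α x with
  | none => simp [pmul, hx]
  | some y =>
    obtain ⟨u, hu, hau⟩ := pinv_some α hx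
    simp [pmul, hx, hu, hau]

theorem stmt13 {V : Type*} (G : SimpleGraph V) :
    (∀ α : V → Option V, IsPsEndG G α →
        ∃ β : V → Option V, IsPsEndG G β ∧ pmul (pmul α β) α = α)
    ∧ (∀ α : V → Option V, IsPswEndG G α →
        ∃ β : V → Option V, IsPswEndG G β ∧ pmul (pmul α β) α = α) := by
  constructor
  · intro α hα
    refine ⟨pinv α, ?_, pmul_pinv α⟩
    intro a b u v ha hb
    exact (hα u v a b (pinv_spec α ha) (pinv_spec α hb)).symm
  · intro α hα
    refine ⟨pinv α, ?_, pmul_pinv α⟩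
    intro a b u v ha hb
    have hu := pinv_spec α ha
    have hv := pinv_spec α hb
    have key := hα u v a b hu hv
    constructor
    · rintro ⟨hab, huv⟩
      exact (key.mpr hab).1
    · intro huv
      have hne : u ≠ v := G.ne_of_adj huv
      have hab : a ≠ b := by
        intro h; subst h
        rw [ha] at hb; exact hne (Option.some.inj hb)
      exact ⟨key.mp ⟨huv, hab⟩, hne⟩
end
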